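/- arXiv:2005.08038 — 2 statements merged into one kernel-verified Lean document; each statement's English description precedes it below -/
import Mathlib

section
/- Let n ≥ 13 and let i be an integer with 0 ≤ i ≤ n−1. In the graph P(n,3), d(v_0, e_i^u) = min(q_i + ⌊r_i/2⌋ + 1, q_n − q_i + ⌊r_n/2⌋ − ⌊r_i/2⌋ + 1) if r_i = 0 or (r_n, r_i) = (0,2), and d(v_0, e_i^u) = min(q_i + 2, q_n − q_i + 1) otherwise. -/
/-! `d(v_0, ·)` is pinned down by a potential: a function `D` with `D v_0 = 0` that changes by at
most one along every edge, and that strictly decreases along some edge out of every other vertex,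
is the distance from `v_0`. For `P(n,3)` the potential is the length of the shorter of two walks
from `v_0`, one running forward along `v_0 v_3 v_6 ⋯` and its mirror image running backward, each
finished by a spoke and outer edges. Both conditions reduce to arithmetic of residues mod 3; the
distance to the edge `u_i u_{i+1}` is the smaller of the distances to its endpoints. -/

open SimpleGraph

/-- The vertex set of the generalized Petersen graph: two disjoint copies of `ZMod n`. -/
abbrev GPVert (n : ℕ) := ZMod n ⊕ ZMod n

/-- The outer vertices `u_j`. -/
def pu {n : ℕ} (j : ZMod n) : GPVert n := Sum.inl j

/-- The inner vertices `v_j`. -/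
def pv {n : ℕ} (j : ZMod n) : GPVert n := Sum.inr j

/-- The generalized Petersen graph `P(n,k)`, with edges
`u_j u_{j+1}`, `v_j v_{j+k}`, and `u_j v_j` for all `j`. -/
def GP (n k : ℕ) : SimpleGraph (GPVert n) :=
  SimpleGraph.fromRel fun a b =>
    (∃ j : ZMod n, a = pu j ∧ b = pu (j + 1)) ∨
    (∃ j : ZMod n, a = pv j ∧ b = pv (j + (k : ZMod n))) ∨
    (∃ j : ZMod n, a = pu j ∧ b = pv j)

/-- The distance from a vertex to an (unordered) edge:
`d(x, yz) = min (d x y) (d x z)`. -/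
noncomputable def edist {V : Type*} (G : SimpleGraph V) (x : V) (e : Sym2 V) : ℕ :=
  Sym2.lift ⟨fun a b => min (G.dist x a) (G.dist x b), fun a b => min_comm (G.dist x a) (G.dist x b)⟩ e

/-- `S` is an edge resolving set of `G` if any two distinct edges of `G`
are distinguished by their distance to some vertex of `S`. -/
def IsEdgeResolving {V : Type*} (G : SimpleGraph V) (S : Set V) : Prop :=
  ∀ e ∈ G.edgeSet, ∀ e' ∈ G.edgeSet, e ≠ e' → ∃ x ∈ S, edist G x e ≠ edist G x e'

/-- `q_m`: the quotient of `m` upon division by 3. -/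
def q3 (m : ℕ) : ℤ := (m : ℤ) / 3

/-- `r_m`: the residue of `m` modulo 3. -/
def r3 (m : ℕ) : ℤ := (m : ℤ) % 3

/- `dOuter m` and `dInner m` are the lengths of the walks from `v_0` to `u_m` and `v_m` that run
through `v_3, v_6, …` up to the multiple of 3 nearest to `m`, then cross a spoke and walk along
the outer cycle; `v_m` itself is reached directly when `3 ∣ m`. -/
def dOuter (m : ℕ) : ℕ := m / 3 + m % 3 + 1

def dInner (m : ℕ) : ℕ := if m % 3 = 0 then m / 3 else dOuter m + 1

def dEdge (m : ℕ) : ℕ := min (dOuter m) (dOuter (m + 1))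

def cycMin (f : ℕ → ℕ) (n m : ℕ) : ℕ := min (f m) (f (n - m))

section CycMin

variable {n m a b i : ℕ}

theorem dInner_add_three (m : ℕ) : dInner (m + 3) = dInner m + 1 := by
  simp only [dInner, dOuter, Nat.add_mod_right]; split_ifs <;> omega

theorem dInner_lt_dOuter (h : m % 3 = 0) : dInner m < dOuter m := by
  simp only [dInner, dOuter, h, if_true]; omega

theorem dOuter_lt_dInner (h : m % 3 ≠ 0) : dOuter m < dInner m := by
  simp only [dInner, h, if_false]; omega

theorem dOuter_sub_one_lt (h : m % 3 ≠ 0) : dOuter (m - 1) < dOuter m := by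
  simp only [dOuter]; omega

theorem cycMin_le_of_add {f : ℕ → ℕ} {c : ℕ} (hc : m + c ≤ n) (ha : a = m + c ∨ a + n = m + c) :
    cycMin f n a ≤ f (n - (m + c)) := by
  rcases ha with rfl | ha
  · exact min_le_right _ _
  · obtain rfl : a = 0 := by omega
    exact (min_le_left _ _).trans_eq (by congr 1; omega)

theorem cycMin_dOuter_succ_le (hm : m < n) (h : a = m + 1 ∨ a + n = m + 1) :
    cycMin dOuter n a ≤ cycMin dOuter n m + 1 ∧ cycMin dOuter n m ≤ cycMin dOuter n a + 1 := by
  simp only [cycMin, dOuter]; omega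

theorem cycMin_dInner_add_three_le (hn : 8 ≤ n) (hm : m < n) (ha : a < n)
    (h : a = m + 3 ∨ a + n = m + 3) :
    cycMin dInner n a ≤ cycMin dInner n m + 1 ∧ cycMin dInner n m ≤ cycMin dInner n a + 1 := by
  simp only [cycMin, dInner, dOuter]; split_ifs <;> omega

theorem cycMin_dInner_le_dOuter :
    cycMin dInner n m ≤ cycMin dOuter n m + 1 ∧ cycMin dOuter n m ≤ cycMin dInner n m + 1 := by
  simp only [cycMin, dInner, dOuter]; split_ifs <;> omega

theorem cycMin_dOuter_descent (hb : b < n) (ha : a = m + 1 ∨ a + n = m + 1)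
    (hb' : m = b + 1 ∨ m + n = b + 1) :
    cycMin dInner n m < cycMin dOuter n m ∨ cycMin dOuter n a < cycMin dOuter n m ∨
      cycMin dOuter n b < cycMin dOuter n m := by
  rcases le_total (dOuter m) (dOuter (n - m)) with h | h
  · rw [show cycMin dOuter n m = dOuter m from min_eq_left h]
    by_cases hr : m % 3 = 0
    · exact .inl ((min_le_left _ _).trans_lt (dInner_lt_dOuter hr))
    · obtain rfl : b = m - 1 := by omega
      exact .inr (.inr ((min_le_left _ _).trans_lt (dOuter_sub_one_lt hr)))
  · rw [show cycMin dOuter n m = dOuter (n - m) from min_eq_right h]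
    by_cases hr : (n - m) % 3 = 0
    · exact .inl ((min_le_right _ _).trans_lt (dInner_lt_dOuter hr))
    · refine .inr (.inl ((cycMin_le_of_add (by omega) ha).trans_lt ?_))
      simpa [Nat.sub_add_eq] using dOuter_sub_one_lt hr

theorem cycMin_dInner_descent (hm0 : 0 < m) (hm : m < n) (hb : b < n)
    (ha : a = m + 3 ∨ a + n = m + 3) (hb' : m = b + 3 ∨ m + n = b + 3) :
    cycMin dOuter n m < cycMin dInner n m ∨ cycMin dInner n a < cycMin dInner n m ∨
      cycMin dInner n b < cycMin dInner n m := by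
  rcases le_total (dInner m) (dInner (n - m)) with h | h
  · rw [show cycMin dInner n m = dInner m from min_eq_left h]
    by_cases hr : m % 3 = 0
    · obtain rfl : m = b + 3 := by omega
      exact .inr (.inr ((min_le_left _ _).trans_lt (by rw [dInner_add_three]; omega)))
    · exact .inl ((min_le_left _ _).trans_lt (dOuter_lt_dInner hr))
  · rw [show cycMin dInner n m = dInner (n - m) from min_eq_right h]
    by_cases hr : (n - m) % 3 = 0
    · refine .inr (.inl ((cycMin_le_of_add (by omega) ha).trans_lt ?_))
      have := dInner_add_three (n - (m + 3))
      rw [show n - (m + 3) + 3 = n - m by omega] at this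
      omega
    · exact .inl ((min_le_right _ _).trans_lt (dOuter_lt_dInner hr))

theorem min_cycMin_dOuter_succ (hi : i < n) (ha : a = i + 1 ∨ a + n = i + 1) :
    min (cycMin dOuter n i) (cycMin dOuter n a) = min (dEdge i) (dEdge (n - 1 - i)) := by
  simp only [cycMin, dEdge]
  rcases ha with rfl | ha
  · rw [show n - (i + 1) = n - 1 - i by omega, show n - i = n - 1 - i + 1 by omega]
    omega
  · obtain rfl : a = 0 := by omega
    obtain rfl : i = n - 1 := by omega
    rw [show n - (n - 1) = 0 + 1 by omega, show n - 1 - (n - 1) = 0 by omega,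
      show n - 0 = n - 1 + 1 by omega]
    omega

theorem dEdge_eq (m : ℕ) : dEdge m = m / 3 + if m % 3 = 0 then 1 else 2 := by
  simp only [dEdge, dOuter]; split_ifs <;> omega

theorem min_dEdge_eq (hi : i < n) :
    ((min (dEdge i) (dEdge (n - 1 - i)) : ℕ) : ℤ) =
      if r3 i = 0 ∨ (r3 n = 0 ∧ r3 i = 2) then
        min (q3 i + r3 i / 2 + 1) (q3 n - q3 i + r3 n / 2 - r3 i / 2 + 1)
      else
        min (q3 i + 2) (q3 n - q3 i + 1) := by
  simp only [dEdge_eq, q3, r3]; split_ifs <;> omega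

end CycMin

namespace SimpleGraph

variable {V : Type*} {G : SimpleGraph V} {D : V → ℕ}

theorem Walk.le_add_length_of_adj_le (hD : ∀ x y, G.Adj x y → D y ≤ D x + 1) {u v : V}
    (w : G.Walk u v) : D v ≤ D u + w.length := by
  induction w with
  | nil => simp
  | cons h _ ih => have := hD _ _ h; rw [Walk.length_cons]; omega

theorem exists_walk_length_le_of_exists_adj_lt {v : V}
    (hD : ∀ x, x ≠ v → ∃ y, G.Adj x y ∧ D y < D x) (x : V) :
    ∃ w : G.Walk v x, w.length ≤ D x := by
  induction hx : D x using Nat.strong_induction_on generalizing x with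
  | _ k ih =>
    by_cases hxv : x = v
    · subst hxv; exact ⟨.nil, by simp⟩
    · obtain ⟨y, hxy, hy⟩ := hD x hxv
      obtain ⟨w, hw⟩ := ih (D y) (hx ▸ hy) y rfl
      exact ⟨w.concat hxy.symm, by rw [Walk.length_concat]; omega⟩

theorem dist_eq_of_adj_le_of_exists_adj_lt {v : V} (h0 : D v = 0)
    (hle : ∀ x y, G.Adj x y → D y ≤ D x + 1) (hlt : ∀ x, x ≠ v → ∃ y, G.Adj x y ∧ D y < D x)
    (x : V) : G.dist v x = D x := by
  obtain ⟨w, hw⟩ := exists_walk_length_le_of_exists_adj_lt hlt x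
  obtain ⟨p, hp⟩ := Reachable.exists_walk_length_eq_dist ⟨w⟩
  have := p.le_add_length_of_adj_le hle
  have := dist_le w
  omega

end SimpleGraph

theorem ZMod.val_add_natCast_eq_or {n k : ℕ} (a : ZMod n) (hk : k < n) :
    (a + k).val = a.val + k ∨ (a + k).val + n = a.val + k := by
  have : NeZero n := ⟨by omega⟩
  have hv : (k : ZMod n).val = k := ZMod.val_natCast_of_lt hk
  rcases lt_or_ge (a.val + (k : ZMod n).val) n with h | h
  · exact .inl ((ZMod.val_add_of_lt h).trans (by rw [hv]))
  · exact .inr ((ZMod.val_add_val_of_le h).symm.trans (by rw [hv]))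

namespace GP

variable {n k : ℕ}

theorem adj_pu_add_one [Nontrivial (ZMod n)] (j : ZMod n) : (GP n k).Adj (pu j) (pu (j + 1)) := by
  rw [GP, fromRel_adj]
  exact ⟨by simp [pu], .inl (.inl ⟨j, rfl, rfl⟩)⟩

theorem adj_pv_add (hk : (k : ZMod n) ≠ 0) (j : ZMod n) : (GP n k).Adj (pv j) (pv (j + k)) := by
  rw [GP, fromRel_adj]
  exact ⟨by simpa [pv] using hk, .inl (.inr (.inl ⟨j, rfl, rfl⟩))⟩

theorem adj_pu_pv (j : ZMod n) : (GP n k).Adj (pu j) (pv j) := by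
  rw [GP, fromRel_adj]
  exact ⟨by simp [pu, pv], .inl (.inr (.inr ⟨j, rfl, rfl⟩))⟩

theorem adj_pu_sub_one [Nontrivial (ZMod n)] (j : ZMod n) : (GP n k).Adj (pu j) (pu (j - 1)) := by
  have h := (adj_pu_add_one (k := k) (j - 1)).symm
  rwa [sub_add_cancel] at h

theorem adj_pv_sub (hk : (k : ZMod n) ≠ 0) (j : ZMod n) : (GP n k).Adj (pv j) (pv (j - k)) := by
  have h := (adj_pv_add hk (j - k)).symm
  rwa [sub_add_cancel] at h

theorem forall_adj {P : GPVert n → GPVert n → Prop} (hP : ∀ x y, P x y → P y x)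
    (hu : ∀ j, P (pu j) (pu (j + 1))) (hv : ∀ j, P (pv j) (pv (j + k))) (hs : ∀ j, P (pu j) (pv j))
    {x y : GPVert n} (h : (GP n k).Adj x y) : P x y := by
  rw [GP, fromRel_adj] at h
  obtain ⟨-, h | h⟩ := h <;> [skip; apply hP] <;>
    obtain ⟨j, rfl, rfl⟩ | ⟨j, rfl, rfl⟩ | ⟨j, rfl, rfl⟩ := h
  all_goals first | exact hu j | exact hv j | exact hs j

end GP

def potential (n : ℕ) : GPVert n → ℕ :=
  Sum.elim (fun j => cycMin dOuter n j.val) (fun j => cycMin dInner n j.val)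

section Potential

variable {n : ℕ}

theorem potential_pv_zero : potential n (pv 0) = 0 := by
  simp [potential, pv, cycMin, dInner]

theorem potential_adj_le (hn : 8 ≤ n) {x y : GPVert n} (h : (GP n 3).Adj x y) :
    potential n y ≤ potential n x + 1 := by
  have : NeZero n := ⟨by omega⟩
  refine (GP.forall_adj (P := fun x y => potential n y ≤ potential n x + 1 ∧
    potential n x ≤ potential n y + 1) (fun _ _ h => h.symm) (fun j => ?_) (fun j => ?_)
    (fun j => cycMin_dInner_le_dOuter) h).1
  · have hj := ZMod.val_add_natCast_eq_or j (k := 1) (by omega)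
    rw [Nat.cast_one] at hj
    exact cycMin_dOuter_succ_le (ZMod.val_lt j) hj
  · exact cycMin_dInner_add_three_le hn (ZMod.val_lt j) (ZMod.val_lt _)
      (ZMod.val_add_natCast_eq_or j (by omega))

theorem exists_adj_potential_lt (hn : 8 ≤ n) {x : GPVert n} (hx : x ≠ pv 0) :
    ∃ y, (GP n 3).Adj x y ∧ potential n y < potential n x := by
  have : Fact (1 < n) := ⟨by omega⟩
  rcases x with j | j
  · show ∃ y, (GP n 3).Adj (pu j) y ∧ potential n y < potential n (pu j)
    have ha := ZMod.val_add_natCast_eq_or j (k := 1) (by omega)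
    have hb := ZMod.val_add_natCast_eq_or (j - 1) (k := 1) (by omega)
    rw [Nat.cast_one] at ha hb
    rw [sub_add_cancel] at hb
    obtain h | h | h := cycMin_dOuter_descent (ZMod.val_lt (j - 1)) ha hb
    · exact ⟨pv j, GP.adj_pu_pv j, h⟩
    · exact ⟨pu (j + 1), GP.adj_pu_add_one j, h⟩
    · exact ⟨pu (j - 1), GP.adj_pu_sub_one j, h⟩
  · show ∃ y, (GP n 3).Adj (pv j) y ∧ potential n y < potential n (pv j)
    have hj : 0 < j.val := ZMod.val_pos.2 fun h => hx (h ▸ rfl)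
    have h3 : ((3 : ℕ) : ZMod n) ≠ 0 := by
      rw [← ZMod.val_pos, ZMod.val_natCast_of_lt (by omega)]; omega
    have ha := ZMod.val_add_natCast_eq_or j (k := 3) (by omega)
    have hb := ZMod.val_add_natCast_eq_or (j - ((3 : ℕ) : ZMod n)) (k := 3) (by omega)
    rw [sub_add_cancel] at hb
    obtain h | h | h := cycMin_dInner_descent hj (ZMod.val_lt j) (ZMod.val_lt _) ha hb
    · exact ⟨pu j, (GP.adj_pu_pv j).symm, h⟩
    · exact ⟨pv (j + ((3 : ℕ) : ZMod n)), GP.adj_pv_add h3 j, h⟩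
    · exact ⟨pv (j - ((3 : ℕ) : ZMod n)), GP.adj_pv_sub h3 j, h⟩

theorem dist_pv_zero_pu (hn : 8 ≤ n) (j : ZMod n) :
    (GP n 3).dist (pv 0) (pu j) = cycMin dOuter n j.val :=
  SimpleGraph.dist_eq_of_adj_le_of_exists_adj_lt potential_pv_zero
    (fun _ _ => potential_adj_le hn) (fun _ => exists_adj_potential_lt hn) (pu j)

end Potential

/-- The distance from `v_0` to the outer edge `e_i^u = u_i u_{i+1}` in `P(n,3)`, `n ≥ 13`. -/
theorem dist_v0_outer_edge (n i : ℕ) (hn : 13 ≤ n) (hi : i ≤ n - 1) :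
    (edist (GP n 3) (pv 0) s(pu (i : ZMod n), pu ((i : ZMod n) + 1)) : ℤ) =
      if r3 i = 0 ∨ (r3 n = 0 ∧ r3 i = 2) then
        min (q3 i + r3 i / 2 + 1) (q3 n - q3 i + r3 n / 2 - r3 i / 2 + 1)
      else
        min (q3 i + 2) (q3 n - q3 i + 1) := by
  have hi' : (i : ZMod n).val = i := ZMod.val_natCast_of_lt (by omega)
  have hsucc := ZMod.val_add_natCast_eq_or (i : ZMod n) (k := 1) (by omega)
  rw [Nat.cast_one, hi'] at hsucc
  simp only [_root_.edist, Sym2.lift_mk, dist_pv_zero_pu (by omega : 8 ≤ n), hi']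
  rw [min_cycMin_dOuter_succ (by omega) hsucc]
  exact min_dEdge_eq (by omega)
end

section
/- Let n ≥ 13 and let i be an integer with 0 ≤ i ≤ ⌊n/2⌋. In the graph P(n,3), the vertex distance satisfies: d(v_0, v_i) = q_i + r_i − 1 if (r_n', i) = (5, ⌊n/2⌋); d(v_0, v_i) = q_i + r_i if (r_n' ∈ {2,4} and i = M_n) or r_i = 0; d(v_0, v_i) = q_i + r_i + 1 if r_n' ∈ {1,5} and i = M_n; and d(v_0, v_i) = q_i + r_i + 2 in all remaining cases. -/
open SimpleGraph

/-- `M_n`: the greatest `j` with `0 ≤ j < ⌊n/2⌋` and `r_j = r_n`. -/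
def Mn (n : ℕ) : ℕ := Nat.findGreatest (fun j => j % 3 = n % 3) (n / 2 - 1)

/-- inner potential -/
def gI (m : ℕ) : ℕ := m / 3 + m % 3 + 2 * min (m % 3) 1
/-- outer potential -/
def gO (m : ℕ) : ℕ := m / 3 + m % 3 + 1

def phiP (n : ℕ) : GPVert n → ℕ
  | Sum.inl j => min (gO j.val) (gO (n - j.val))
  | Sum.inr j => min (gI j.val) (gI (n - j.val))

lemma val_add_small {n : ℕ} [NeZero n] (j : ZMod n) (c : ℕ) (hc : c < n) :
    (j + (c : ZMod n)).val = if j.val + c < n then j.val + c else j.val + c - n := by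
  rw [ZMod.val_add, ZMod.val_natCast, Nat.mod_eq_of_lt hc]
  have := j.val_lt
  split
  · exact Nat.mod_eq_of_lt ‹_›
  · rw [Nat.mod_eq_sub_mod (by omega), Nat.mod_eq_of_lt (by omega)]

lemma ne_add_of_small {n : ℕ} (hn : 13 ≤ n) (j : ZMod n) (c : ℕ) (hc1 : 1 ≤ c)
    (hc : c + 1 < n) : j ≠ j + (c : ZMod n) := by
  haveI : NeZero n := ⟨by omega⟩
  intro h
  have h2 := congrArg ZMod.val h
  rw [val_add_small j c (by omega)] at h2
  have := j.val_lt
  split at h2 <;> omega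

lemma adj_uu {n : ℕ} (hn : 13 ≤ n) (j : ZMod n) :
    (GP n 3).Adj (pu j) (pu (j + 1)) := by
  simp only [GP, fromRel_adj]
  refine ⟨?_, Or.inl (Or.inl ⟨j, rfl, rfl⟩)⟩
  have := ne_add_of_small hn j 1 le_rfl (by omega)
  simpa [pu, Nat.cast_one] using this

lemma adj_vv {n : ℕ} (hn : 13 ≤ n) (j : ZMod n) :
    (GP n 3).Adj (pv j) (pv (j + ((3:ℕ) : ZMod n))) := by
  simp only [GP, fromRel_adj]
  refine ⟨?_, Or.inl (Or.inr (Or.inl ⟨j, rfl, rfl⟩))⟩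
  have := ne_add_of_small hn j 3 (by omega) (by omega)
  simpa [pv] using this

lemma adj_uv {n : ℕ} (j : ZMod n) : (GP n 3).Adj (pu j) (pv j) := by
  simp only [GP, fromRel_adj]
  exact ⟨by simp [pu, pv], Or.inl (Or.inr (Or.inr ⟨j, rfl, rfl⟩))⟩

lemma phi_adj {n : ℕ} (hn : 13 ≤ n) {x y : GPVert n} (hxy : (GP n 3).Adj x y) :
    phiP n y ≤ phiP n x + 1 := by
  haveI : NeZero n := ⟨by omega⟩
  rw [GP, fromRel_adj] at hxy
  obtain ⟨-, h | h⟩ := hxy <;>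
  rcases h with ⟨j, rfl, rfl⟩ | ⟨j, rfl, rfl⟩ | ⟨j, rfl, rfl⟩ <;>
  · have hval := j.val_lt
    simp only [phiP, pu, pv, Nat.cast_one, Nat.cast_ofNat] at *
    first
      | (rw [show (1 : ZMod n) = ((1:ℕ) : ZMod n) by norm_num,
            val_add_small j 1 (by omega)]
         split <;> (simp only [gI, gO]; omega))
      | (rw [show (3 : ZMod n) = ((3:ℕ) : ZMod n) by norm_num,
            val_add_small j 3 (by omega)]
         split <;> (simp only [gI, gO]; omega))
      | (simp only [gI, gO]; omega)

lemma phi_le_length {n : ℕ} (hn : 13 ≤ n) {x y : GPVert n} (W : (GP n 3).Walk x y) :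
    phiP n y ≤ phiP n x + W.length := by
  induction W with
  | nil => simp
  | cons h p ih =>
      have := phi_adj hn h
      simp only [Walk.length_cons]
      omega

/-- upper bound bundle -/
def UB {n : ℕ} (x : GPVert n) (c : ℕ) : Prop :=
  (GP n 3).Reachable (pv 0) x ∧ (GP n 3).dist (pv 0) x ≤ c

lemma UB.step {n : ℕ} {x : GPVert n} {c : ℕ} (h : UB x c) {y : GPVert n}
    (ha : (GP n 3).Adj x y) : UB y (c + 1) := by
  obtain ⟨p, hp⟩ := h.1.exists_walk_length_eq_dist
  refine ⟨h.1.trans ha.reachable, ?_⟩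
  have hle := SimpleGraph.dist_le (p.concat ha)
  rw [Walk.length_concat, hp] at hle
  have := h.2
  omega

lemma ub_v3 {n : ℕ} (hn : 13 ≤ n) (m : ℕ) : UB (pv ((3 * m : ℕ) : ZMod n)) m := by
  induction m with
  | zero =>
      simp only [Nat.mul_zero, Nat.cast_zero, neg_zero]
      exact ⟨Reachable.refl _, by rw [SimpleGraph.dist_self]⟩
  | succ m ih =>
      have he : ((3 * (m+1) : ℕ) : ZMod n) = ((3 * m : ℕ) : ZMod n) + ((3:ℕ) : ZMod n) := by
        push_cast; ring
      rw [he]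
      exact ih.step (adj_vv hn _)

lemma ub_v3neg {n : ℕ} (hn : 13 ≤ n) (m : ℕ) : UB (pv (-((3 * m : ℕ) : ZMod n))) m := by
  induction m with
  | zero =>
      simp only [Nat.mul_zero, Nat.cast_zero, neg_zero]
      exact ⟨Reachable.refl _, by rw [SimpleGraph.dist_self]⟩
  | succ m ih =>
      have ha := (adj_vv hn (-((3 * (m+1) : ℕ) : ZMod n))).symm
      have he : -((3 * (m+1) : ℕ) : ZMod n) + ((3:ℕ) : ZMod n) = -((3 * m : ℕ) : ZMod n) := by
        push_cast; ring
      rw [he] at ha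
      exact ih.step ha

lemma UB.shift1 {n : ℕ} (hn : 13 ≤ n) {w : ZMod n} {c : ℕ} (h : UB (pv w) c) :
    UB (pv (w + 1)) (c + 3) :=
  ((h.step (adj_uv w).symm).step (adj_uu hn w)).step (adj_uv (w + 1))

lemma UB.shift2 {n : ℕ} (hn : 13 ≤ n) {w : ZMod n} {c : ℕ} (h : UB (pv w) c) :
    UB (pv (w + 2)) (c + 4) := by
  have := (((h.step (adj_uv w).symm).step (adj_uu hn w)).step (adj_uu hn (w+1))).step
    (adj_uv (w + 1 + 1))
  rwa [show w + 1 + 1 = w + 2 by ring] at this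

lemma UB.shift1n {n : ℕ} (hn : 13 ≤ n) {w : ZMod n} {c : ℕ} (h : UB (pv w) c) :
    UB (pv (w - 1)) (c + 3) := by
  have ha := (adj_uu hn (w - 1)).symm
  rw [show w - 1 + 1 = w by ring] at ha
  exact ((h.step (adj_uv w).symm).step ha).step (adj_uv (w - 1))

lemma UB.shift2n {n : ℕ} (hn : 13 ≤ n) {w : ZMod n} {c : ℕ} (h : UB (pv w) c) :
    UB (pv (w - 2)) (c + 4) := by
  have ha := (adj_uu hn (w - 1)).symm
  rw [show w - 1 + 1 = w by ring] at ha
  have ha2 := (adj_uu hn (w - 2)).symm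
  rw [show w - 2 + 1 = w - 1 by ring] at ha2
  exact (((h.step (adj_uv w).symm).step ha).step ha2).step (adj_uv (w - 2))

lemma ub_pos {n : ℕ} (hn : 13 ≤ n) (m : ℕ) : UB (pv ((m : ℕ) : ZMod n)) (gI m) := by
  rcases (show m % 3 = 0 ∨ m % 3 = 1 ∨ m % 3 = 2 by omega) with h | h | h
  · have hm : m = 3 * (m / 3) := by omega
    have hg : gI m = m / 3 := by simp only [gI]; omega
    have h2 := ub_v3 hn (m / 3)
    rw [← hm] at h2
    rw [hg]; exact h2
  · obtain ⟨q, rfl⟩ : ∃ q, m = 3 * q + 1 := ⟨m / 3, by omega⟩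
    have hg : gI (3 * q + 1) = q + 3 := by simp only [gI]; omega
    rw [hg]
    have := (ub_v3 hn q).shift1 hn
    rwa [show ((3 * q : ℕ) : ZMod n) + 1 = ((3 * q + 1 : ℕ) : ZMod n) by push_cast; ring] at this
  · obtain ⟨q, rfl⟩ : ∃ q, m = 3 * q + 2 := ⟨m / 3, by omega⟩
    have hg : gI (3 * q + 2) = q + 4 := by simp only [gI]; omega
    rw [hg]
    have := (ub_v3 hn q).shift2 hn
    rwa [show ((3 * q : ℕ) : ZMod n) + 2 = ((3 * q + 2 : ℕ) : ZMod n) by push_cast; ring] at this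

lemma ub_neg {n : ℕ} (hn : 13 ≤ n) (m : ℕ) : UB (pv (-((m : ℕ) : ZMod n))) (gI m) := by
  rcases (show m % 3 = 0 ∨ m % 3 = 1 ∨ m % 3 = 2 by omega) with h | h | h
  · have hm : m = 3 * (m / 3) := by omega
    have hg : gI m = m / 3 := by simp only [gI]; omega
    have h2 := ub_v3neg hn (m / 3)
    rw [← hm] at h2
    rw [hg]; exact h2
  · obtain ⟨q, rfl⟩ : ∃ q, m = 3 * q + 1 := ⟨m / 3, by omega⟩
    have hg : gI (3 * q + 1) = q + 3 := by simp only [gI]; omega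
    rw [hg]
    have := (ub_v3neg hn q).shift1n hn
    rwa [show -((3 * q : ℕ) : ZMod n) - 1 = -((3 * q + 1 : ℕ) : ZMod n) by push_cast; ring]
      at this
  · obtain ⟨q, rfl⟩ : ∃ q, m = 3 * q + 2 := ⟨m / 3, by omega⟩
    have hg : gI (3 * q + 2) = q + 4 := by simp only [gI]; omega
    rw [hg]
    have := (ub_v3neg hn q).shift2n hn
    rwa [show -((3 * q : ℕ) : ZMod n) - 2 = -((3 * q + 2 : ℕ) : ZMod n) by push_cast; ring]
      at this

lemma dist_eq_min {n : ℕ} (hn : 13 ≤ n) (i : ℕ) (hi : i ≤ n / 2) :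
    (GP n 3).dist (pv 0) (pv ((i : ℕ) : ZMod n)) = min (gI i) (gI (n - i)) := by
  haveI : NeZero n := ⟨by omega⟩
  have hneg : ((i : ℕ) : ZMod n) = -(((n - i : ℕ) : ZMod n)) := by
    have : ((n : ℕ) : ZMod n) = 0 := ZMod.natCast_self n
    rw [Nat.cast_sub (by omega)]
    rw [this]; ring
  have h1 := ub_pos hn i
  have h2 := ub_neg hn (n - i)
  rw [← hneg] at h2
  apply Nat.le_antisymm
  · exact le_min h1.2 h2.2
  · obtain ⟨W, hW⟩ := h1.1.exists_walk_length_eq_dist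
    have hlb := phi_le_length hn W
    rw [hW] at hlb
    have h0 : phiP n (pv (0 : ZMod n)) = 0 := by
      simp [phiP, pv, ZMod.val_zero, gI]
    have hv : phiP n (pv ((i : ℕ) : ZMod n)) = min (gI i) (gI (n - i)) := by
      simp only [phiP, pv, ZMod.val_natCast]
      rw [Nat.mod_eq_of_lt (by omega)]
    rw [h0, hv] at hlb
    omega

lemma Mn_facts {n : ℕ} (hn : 13 ≤ n) :
    Mn n % 3 = n % 3 ∧ n / 2 - 3 ≤ Mn n ∧ Mn n < n / 2 := by
  obtain ⟨j0, hj0b, hj0lb, hj0P⟩ :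
      ∃ j0, j0 ≤ n / 2 - 1 ∧ n / 2 - 1 ≤ j0 + 2 ∧ j0 % 3 = n % 3 :=
    ⟨(n / 2 - 1) - ((n / 2 - 1) + 3 - n % 3) % 3, by omega, by omega, by omega⟩
  have h1 : Mn n % 3 = n % 3 :=
    Nat.findGreatest_spec (P := fun j => j % 3 = n % 3) hj0b hj0P
  have h2 : j0 ≤ Mn n :=
    Nat.le_findGreatest (P := fun j => j % 3 = n % 3) hj0b hj0P
  have h3 : Mn n ≤ n / 2 - 1 :=
    Nat.findGreatest_le (P := fun j => j % 3 = n % 3) (n / 2 - 1)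
  exact ⟨h1, by omega, by omega⟩

lemma arith1 {n i M : ℕ} (hn : 13 ≤ n) (hi : i ≤ n / 2)
    (hM1 : M % 3 = n % 3) (hM2 : n / 2 - 3 ≤ M) (hM3 : M < n / 2)
    (h1 : n % 6 = 5 ∧ i = n / 2) :
    ((min (gI i) (gI (n - i)) : ℕ) : ℤ) = q3 i + r3 i - 1 := by
  simp only [q3, r3, gI]
  rcases (show i % 3 = 0 ∨ i % 3 = 1 ∨ i % 3 = 2 by omega) with h | h | h <;>
  rcases (show (n - i) % 3 = 0 ∨ (n - i) % 3 = 1 ∨ (n - i) % 3 = 2 by omega) with h' | h' | h' <;>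
  omega

lemma arith2 {n i M : ℕ} (hn : 13 ≤ n) (hi : i ≤ n / 2)
    (hM1 : M % 3 = n % 3) (hM2 : n / 2 - 3 ≤ M) (hM3 : M < n / 2)
    (h1 : ¬(n % 6 = 5 ∧ i = n / 2))
    (h2 : ((n % 6 = 2 ∨ n % 6 = 4) ∧ i = M) ∨ i % 3 = 0) :
    ((min (gI i) (gI (n - i)) : ℕ) : ℤ) = q3 i + r3 i := by
  simp only [q3, r3, gI]
  rcases (show i % 3 = 0 ∨ i % 3 = 1 ∨ i % 3 = 2 by omega) with h | h | h <;>
  rcases (show (n - i) % 3 = 0 ∨ (n - i) % 3 = 1 ∨ (n - i) % 3 = 2 by omega) with h' | h' | h' <;>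
  rcases (show n % 2 = 0 ∨ n % 2 = 1 by omega) with h'' | h'' <;>
  omega

lemma arith3 {n i M : ℕ} (hn : 13 ≤ n) (hi : i ≤ n / 2)
    (hM1 : M % 3 = n % 3) (hM2 : n / 2 - 3 ≤ M) (hM3 : M < n / 2)
    (h1 : ¬(n % 6 = 5 ∧ i = n / 2))
    (h2 : ¬(((n % 6 = 2 ∨ n % 6 = 4) ∧ i = M) ∨ i % 3 = 0))
    (h3 : (n % 6 = 1 ∨ n % 6 = 5) ∧ i = M) :
    ((min (gI i) (gI (n - i)) : ℕ) : ℤ) = q3 i + r3 i + 1 := by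
  simp only [q3, r3, gI]
  rcases (show i % 3 = 0 ∨ i % 3 = 1 ∨ i % 3 = 2 by omega) with h | h | h <;>
  rcases (show (n - i) % 3 = 0 ∨ (n - i) % 3 = 1 ∨ (n - i) % 3 = 2 by omega) with h' | h' | h' <;>
  rcases (show n % 2 = 0 ∨ n % 2 = 1 by omega) with h'' | h'' <;>
  omega

lemma arith4 {n i M : ℕ} (hn : 13 ≤ n) (hi : i ≤ n / 2)
    (hM1 : M % 3 = n % 3) (hM2 : n / 2 - 3 ≤ M) (hM3 : M < n / 2)
    (h1 : ¬(n % 6 = 5 ∧ i = n / 2))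
    (h2 : ¬(((n % 6 = 2 ∨ n % 6 = 4) ∧ i = M) ∨ i % 3 = 0))
    (h3 : ¬((n % 6 = 1 ∨ n % 6 = 5) ∧ i = M)) :
    ((min (gI i) (gI (n - i)) : ℕ) : ℤ) = q3 i + r3 i + 2 := by
  simp only [q3, r3, gI]
  rcases (show i % 3 = 0 ∨ i % 3 = 1 ∨ i % 3 = 2 by omega) with h | h | h <;>
  rcases (show (n - i) % 3 = 0 ∨ (n - i) % 3 = 1 ∨ (n - i) % 3 = 2 by omega) with h' | h' | h' <;>
  rcases (show n % 2 = 0 ∨ n % 2 = 1 by omega) with h'' | h'' <;>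
  omega

/-- Distance from `v_0` to `v_i` in `P(n,3)` for `0 ≤ i ≤ ⌊n/2⌋`, `n ≥ 13`. -/
theorem dist_v0_vi (n i : ℕ) (hn : 13 ≤ n) (hi : i ≤ n / 2) :
    ((GP n 3).dist (pv 0) (pv (i : ZMod n)) : ℤ) =
      if n % 6 = 5 ∧ i = n / 2 then q3 i + r3 i - 1
      else if ((n % 6 = 2 ∨ n % 6 = 4) ∧ i = Mn n) ∨ i % 3 = 0 then q3 i + r3 i
      else if (n % 6 = 1 ∨ n % 6 = 5) ∧ i = Mn n then q3 i + r3 i + 1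
      else q3 i + r3 i + 2 := by
  rw [dist_eq_min hn i hi]
  obtain ⟨hM1, hM2, hM3⟩ := Mn_facts hn
  generalize hMg : Mn n = M at hM1 hM2 hM3 ⊢
  clear hMg
  split_ifs with h1 h2 h3
  · exact arith1 hn hi hM1 hM2 hM3 h1
  · exact arith2 hn hi hM1 hM2 hM3 h1 h2
  · exact arith3 hn hi hM1 hM2 hM3 h1 h2 h3
  · exact arith4 hn hi hM1 hM2 hM3 h1 h2 h3
end
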